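/- arXiv:1804.05174 — 6 statements merged into one kernel-verified Lean document; each statement's English description precedes it below -/
import Mathlib

section
/- A perfect product is a set P ⊆ (2^ℕ)^ω of the form P = ∏_{k<ω} P(k) where each projection P(k) = {x(k) : x ∈ P} is a perfect subset of 2^ℕ. Fix φ: ω → ω taking every value infinitely often, and let q(m,j) = |{k < m : φ(k) = j}|. For perfect products P, Q define P ≤ₘ Q iff P(j) ≤_{q(m,j)} Q(j) for all j (refinement of perfect sets in the j-th coordinate). If (Pₙ) is a sequence of perfect products with P_{n+1} ≤_{n+1} Pₙ for all n, then Q = ⋂ₙ Pₙ is a perfect product with Q(j) = ⋂ₙ Pₙ(j) for all j, and Q ≤_{m+1} Pₘ for all m. -/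
/-- Cantor space `2^ℕ`. -/
abbrev Cantor := ℕ → Bool

/-- A perfect subset of Cantor space: nonempty, closed, no isolated points. -/
def PerfectSet (X : Set Cantor) : Prop := X.Nonempty ∧ Perfect X

/-- The length of the stem of `X`: the length of the longest finite binary string
that is an initial segment of every element of `X`. -/
noncomputable def stemLen (X : Set Cantor) : ℕ :=
  sSup {n | ∀ x ∈ X, ∀ y ∈ X, ∀ i < n, x i = y i}

/-- Simple splitting piece `X^i = {x ∈ X | x(|stem X|) = i}`. -/
noncomputable def splitPiece (X : Set Cantor) (i : Bool) : Set Cantor :=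
  {x ∈ X | x (stemLen X) = i}

/-- Iterated simple splitting `X_s`: `X_Λ = X`, `X_{s⌢i} = (X_s)^i`. -/
noncomputable def iterSplit (X : Set Cantor) (s : List Bool) : Set Cantor :=
  s.foldl splitPiece X

/-- Refinement `X ≤ₙ Y`: `X_s ⊆ Y_s` for every binary string `s` of length `n`. -/
def refines (n : ℕ) (X Y : Set Cantor) : Prop :=
  ∀ s : List Bool, s.length = n → iterSplit X s ⊆ iterSplit Y s

/-- The perfect product `∏_k P(k) ⊆ (2^ℕ)^ω` determined by coordinatewise sets. -/
def prodSet (P : ℕ → Set Cantor) : Set (ℕ → Cantor) := {x | ∀ k, x k ∈ P k}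

/-- `P` is a perfect product (given by its coordinates `P k`). -/
def PerfectProduct (P : ℕ → Set Cantor) : Prop := ∀ k, PerfectSet (P k)

/-- `q(m,j) = |{k < m : φ(k) = j}|`. -/
def qcount (phi : ℕ → ℕ) (m j : ℕ) : ℕ :=
  ((Finset.range m).filter fun k => phi k = j).card

/-- `σ/j`: the substring of `σ` read along the positions `k < |σ|` with `φ(k) = j`. -/
def subAlong (phi : ℕ → ℕ) (j : ℕ) (σ : List Bool) : List Bool :=
  ((List.range σ.length).filter fun k => phi k = j).map fun k => σ.getD k false

/-- The split piece `P_σ` of a perfect product, coordinatewise: `P_σ(j) = (P(j))_{σ/j}`. -/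
noncomputable def prodSplit (phi : ℕ → ℕ) (P : ℕ → Set Cantor) (σ : List Bool) :
    ℕ → Set Cantor :=
  fun j => iterSplit (P j) (subAlong phi j σ)

/-- Refinement of perfect products: `P ≤ₘ Q` iff `P(j) ≤_{q(m,j)} Q(j)` for all `j`. -/
def prodRef (phi : ℕ → ℕ) (m : ℕ) (P Q : ℕ → Set Cantor) : Prop :=
  ∀ j, refines (qcount phi m j) (P j) (Q j)

/-- `D(σ,τ) = ω \ {φ(i) : i < m, σ(i) ≠ τ(i)}` (for strings of length `m`). -/
def Dset (phi : ℕ → ℕ) (m : ℕ) (σ τ : List Bool) : Set ℕ :=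
  {j | ¬ ∃ i < m, σ.getD i false ≠ τ.getD i false ∧ phi i = j}

/-!
Work in one coordinate `j`: the sets `Xₖ = Pₖ(j)` are perfect with `Xₖ₊₁ ≤_{r(k+1)} Xₖ`, where
`r(m) = q(m,j)` is monotone and unbounded. Once `|s| < r(m+1)`, the pieces `(Xₖ)_s`, `k ≥ m`, are
nested and all have the same stem, so by compactness their intersection is the piece `Q_s` of
`Q = ⋂ₖ Xₖ`, with that same stem. Hence every piece of `Q` splits into two nonempty halves, which
makes `Q` perfect, and `Q_s ⊆ (Xₘ)_s`.
-/

open PiNat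

-- `stemLen X = sSup (agreeSet X)` by definition. The set is unbounded (and the `sSup` is the junk
-- value `0`) unless two points of `X` differ, hence the witnesses `x i ≠ y i` below.
def agreeSet (X : Set Cantor) : Set ℕ := {n | ∀ x ∈ X, ∀ y ∈ X, ∀ i < n, x i = y i}

section Stem

variable {X Y : Set Cantor} {x y : Cantor} {i : ℕ}

lemma zero_mem_agreeSet (X : Set Cantor) : 0 ∈ agreeSet X :=
  fun _ _ _ _ _ h => absurd h (Nat.not_lt_zero _)

lemma le_of_mem_agreeSet (hx : x ∈ X) (hy : y ∈ X) (h : x i ≠ y i) {n : ℕ}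
    (hn : n ∈ agreeSet X) : n ≤ i :=
  not_lt.1 fun hlt => h (hn x hx y hy i hlt)

lemma stemLen_le_of_ne (hx : x ∈ X) (hy : y ∈ X) (h : x i ≠ y i) : stemLen X ≤ i :=
  csSup_le ⟨0, zero_mem_agreeSet X⟩ fun _ => le_of_mem_agreeSet hx hy h

lemma stemLen_mem_agreeSet (hx : x ∈ X) (hy : y ∈ X) (h : x i ≠ y i) :
    stemLen X ∈ agreeSet X :=
  Nat.sSup_mem ⟨0, zero_mem_agreeSet X⟩ ⟨i, fun _ => le_of_mem_agreeSet hx hy h⟩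

lemma stemLen_eq_of_subset (hYX : Y ⊆ X) (hx : x ∈ Y) (hy : y ∈ Y)
    (h : x (stemLen X) ≠ y (stemLen X)) : stemLen Y = stemLen X := by
  refine le_antisymm (stemLen_le_of_ne hx hy h)
    (le_csSup ⟨_, fun _ => le_of_mem_agreeSet hx hy h⟩ fun u hu v hv j hj => ?_)
  exact stemLen_mem_agreeSet (hYX hx) (hYX hy) h u (hYX hu) v (hYX hv) j hj

end Stem

section Splitting

variable {X Z : Set Cantor}

lemma iterSplit_append_singleton (X : Set Cantor) (s : List Bool) (i : Bool) :
    iterSplit X (s ++ [i]) = splitPiece (iterSplit X s) i := by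
  simp [iterSplit, List.foldl_append]

lemma iterSplit_subset (X : Set Cantor) (s : List Bool) : iterSplit X s ⊆ X := by
  induction s generalizing X with
  | nil => exact subset_rfl
  | cons i s ih => exact (ih _).trans (Set.sep_subset _ _)

lemma exists_length_eq_mem_iterSplit {x : Cantor} (hx : x ∈ X) (n : ℕ) :
    ∃ s : List Bool, s.length = n ∧ x ∈ iterSplit X s := by
  induction n with
  | zero => exact ⟨[], rfl, hx⟩
  | succ n ih =>
    obtain ⟨s, rfl, hs⟩ := ih
    refine ⟨s ++ [x (stemLen (iterSplit X s))], by simp, ?_⟩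
    rw [iterSplit_append_singleton]
    exact ⟨hs, rfl⟩

lemma PerfectSet.splitPiece_nonempty (hX : PerfectSet X) (b : Bool) :
    (splitPiece X b).Nonempty := by
  obtain ⟨⟨x, hx⟩, hperf⟩ := hX
  obtain ⟨y, ⟨-, hy⟩, hyx⟩ :=
    accPt_iff_nhds.1 (hperf.acc x hx) Set.univ Filter.univ_mem
  obtain ⟨i, hi⟩ := Function.ne_iff.1 hyx
  have hbdd : BddAbove (agreeSet X) := ⟨i, fun _ => le_of_mem_agreeSet hy hx hi⟩
  have hsucc : stemLen X + 1 ∉ agreeSet X :=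
    fun h => (le_csSup hbdd h).not_gt (Nat.lt_succ_self _)
  simp only [agreeSet, Set.mem_ofPred_eq, not_forall] at hsucc
  obtain ⟨u, hu, v, hv, j, hj, huv⟩ := hsucc
  obtain rfl : j = stemLen X := (Nat.lt_succ_iff.1 hj).eq_or_lt.resolve_right
    fun hlt => huv (stemLen_mem_agreeSet hy hx hi u hu v hv j hlt)
  have : u (stemLen X) = b ∨ v (stemLen X) = b := by
    revert huv; generalize u (stemLen X) = p; generalize v (stemLen X) = q; revert p q b; decide
  rcases this with h | h
  exacts [⟨u, hu, h⟩, ⟨v, hv, h⟩]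

lemma PerfectSet.splitPiece (hX : PerfectSet X) (b : Bool) : PerfectSet (splitPiece X b) := by
  refine ⟨hX.splitPiece_nonempty b,
    hX.2.closed.inter (isClosed_eq (continuous_apply _) continuous_const), fun x hx => ?_⟩
  rw [accPt_iff_nhds]
  intro U hU
  have hopen : IsOpen {y : Cantor | y (stemLen X) = b} :=
    (continuous_apply (stemLen X) : Continuous fun y : Cantor => y _).isOpen_preimage {b}
      (isOpen_discrete _)
  obtain ⟨y, ⟨⟨hyU, hyb⟩, hyX⟩, hyx⟩ :=
    accPt_iff_nhds.1 (hX.2.acc x hx.1) _ (Filter.inter_mem hU (hopen.mem_nhds hx.2))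
  exact ⟨y, ⟨hyU, hyX, hyb⟩, hyx⟩

lemma PerfectSet.iterSplit (hX : PerfectSet X) (s : List Bool) : PerfectSet (iterSplit X s) := by
  induction s generalizing X with
  | nil => exact hX
  | cons i s ih => exact ih (hX.splitPiece i)

lemma exists_ne_at_stemLen (h : ∀ b, (splitPiece X b).Nonempty) :
    ∃ x ∈ X, ∃ y ∈ X, x (stemLen X) ≠ y (stemLen X) := by
  obtain ⟨x, hx, hx0⟩ := h false
  obtain ⟨y, hy, hy1⟩ := h true
  exact ⟨x, hx, y, hy, by rw [hx0, hy1]; decide⟩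

lemma stemLen_lt_stemLen_splitPiece (h : ∀ b, (splitPiece X b).Nonempty) {i : Bool}
    (hi : ∀ b, (splitPiece (splitPiece X i) b).Nonempty) :
    stemLen X < stemLen (splitPiece X i) := by
  obtain ⟨x, hx, y, hy, hxy⟩ := exists_ne_at_stemLen h
  obtain ⟨u, hu, v, hv, huv⟩ := exists_ne_at_stemLen hi
  refine le_csSup ⟨_, fun _ => le_of_mem_agreeSet hu hv huv⟩ fun p hp q hq j hj => ?_
  rcases (Nat.lt_succ_iff.1 hj).lt_or_eq with hlt | rfl
  · exact stemLen_mem_agreeSet hx hy hxy p hp.1 q hq.1 j hlt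
  · exact hp.2.trans hq.2.symm

lemma length_le_stemLen_iterSplit (h : ∀ s b, (splitPiece (iterSplit Z s) b).Nonempty)
    (s : List Bool) : s.length ≤ stemLen (iterSplit Z s) := by
  induction s using List.reverseRecOn with
  | nil => exact Nat.zero_le _
  | append_singleton s i ih =>
    have hlt := stemLen_lt_stemLen_splitPiece (h s) (i := i) (by
      simpa only [iterSplit_append_singleton] using h (s ++ [i]))
    rw [iterSplit_append_singleton, List.length_append, List.length_singleton]
    omega

lemma perfectSet_of_splitPiece_nonempty (hZ : IsClosed Z)
    (h : ∀ s b, (splitPiece (iterSplit Z s) b).Nonempty) : PerfectSet Z := by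
  refine ⟨(h [] false).mono (Set.sep_subset _ _), hZ, fun x hx => ?_⟩
  rw [accPt_iff_nhds]
  intro U hU
  obtain ⟨_, ⟨y, n, rfl⟩, hxy, hsub⟩ := (isTopologicalBasis_cylinders _).mem_nhds_iff.1 hU
  rw [← mem_cylinder_iff_eq.1 hxy] at hsub
  obtain ⟨s, rfl, hxs⟩ := exists_length_eq_mem_iterSplit hx n
  obtain ⟨z, hzs, hz⟩ := h s (!x (stemLen (iterSplit Z s)))
  have hxz : x (stemLen (iterSplit Z s)) ≠ z (stemLen (iterSplit Z s)) := by
    rw [hz]; cases x (stemLen (iterSplit Z s)) <;> decide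
  refine ⟨z, ⟨hsub fun j hj => ?_, iterSplit_subset Z s hzs⟩, fun hzx => hxz (by rw [hzx])⟩
  exact stemLen_mem_agreeSet hxs hzs hxz z hzs x hxs j
    (hj.trans_le (length_le_stemLen_iterSplit h s))

end Splitting

section Refines

variable {n m : ℕ} {X Y Z : Set Cantor}

lemma refines.trans (h₁ : refines n X Y) (h₂ : refines n Y Z) : refines n X Z :=
  fun s hs => (h₁ s hs).trans (h₂ s hs)

lemma refines.of_succ (h : refines (n + 1) X Y) : refines n X Y := by
  intro s hs x hx
  have hx' : x ∈ iterSplit X (s ++ [x (stemLen (iterSplit X s))]) := by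
    rw [iterSplit_append_singleton]; exact ⟨hx, rfl⟩
  have hy := h _ (by simp [hs]) hx'
  rw [iterSplit_append_singleton] at hy
  exact hy.1

lemma refines.mono (hnm : n ≤ m) (h : refines m X Y) : refines n X Y := by
  induction m, hnm using Nat.le_induction with
  | base => exact h
  | succ m _ ih => exact ih h.of_succ

lemma refines.subset (h : refines n X Y) : X ⊆ Y :=
  (h.mono (Nat.zero_le n)) [] rfl

lemma refines.stemLen_iterSplit_eq (hX : PerfectSet X) (h : refines (n + 1) X Y)
    {s : List Bool} (hs : s.length ≤ n) :
    stemLen (iterSplit X s) = stemLen (iterSplit Y s) := by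
  have hpiece : ∀ b, ∃ x ∈ iterSplit X s, x (stemLen (iterSplit Y s)) = b := fun b => by
    obtain ⟨x, hx⟩ := (hX.iterSplit s).splitPiece_nonempty b
    have hxY := (h.mono (by simpa using hs)) (s ++ [b]) rfl
      (by rw [iterSplit_append_singleton]; exact hx)
    rw [iterSplit_append_singleton] at hxY
    exact ⟨x, hx.1, hxY.2⟩
  obtain ⟨x, hx, hx0⟩ := hpiece false
  obtain ⟨y, hy, hy1⟩ := hpiece true
  exact stemLen_eq_of_subset ((h.mono (by omega)) s rfl) hx hy (by rw [hx0, hy1]; decide)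

end Refines

lemma splitPiece_iInter {Y : ℕ → Set Cantor} (hY : ∀ k, PerfectSet (Y k))
    (hanti : ∀ k, Y (k + 1) ⊆ Y k) (hstem : ∀ k, stemLen (Y k) = stemLen (Y 0)) :
    stemLen (⋂ k, Y k) = stemLen (Y 0) ∧
      ∀ b, splitPiece (⋂ k, Y k) b = ⋂ k, splitPiece (Y k) b := by
  have hpiece : ∀ b, ⋂ k, splitPiece (Y k) b = {x ∈ ⋂ k, Y k | x (stemLen (Y 0)) = b} := by
    intro b; ext x
    simp only [splitPiece, hstem, Set.mem_iInter, Set.mem_sep_iff]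
    exact ⟨fun h => ⟨fun k => (h k).1, (h 0).2⟩, fun h k => ⟨h.1 k, h.2⟩⟩
  have hne : ∀ b, (⋂ k, splitPiece (Y k) b).Nonempty := fun b =>
    IsCompact.nonempty_iInter_of_sequence_nonempty_isCompact_isClosed _
      (fun k x hx => ⟨hanti k hx.1, by rw [hstem k, ← hstem (k + 1)]; exact hx.2⟩)
      (fun k => (hY k).splitPiece_nonempty b) ((hY 0).splitPiece b).2.closed.isCompact
      (fun k => ((hY k).splitPiece b).2.closed)
  obtain ⟨x, hx, hx0⟩ := hpiece false ▸ hne false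
  obtain ⟨y, hy, hy1⟩ := hpiece true ▸ hne true
  have hc : stemLen (⋂ k, Y k) = stemLen (Y 0) :=
    stemLen_eq_of_subset (Set.iInter_subset _ 0) hx hy (by rw [hx0, hy1]; decide)
  refine ⟨hc, fun b => ?_⟩
  rw [hpiece, splitPiece, hc]

section ConstantRate

variable {X : ℕ → Set Cantor} {n : ℕ} (hX : ∀ k, PerfectSet (X k))
  (hchain : ∀ k, refines n (X (k + 1)) (X k))
include hchain

lemma refines_zero_of_forall_refines_succ (k : ℕ) : refines n (X k) (X 0) := by
  induction k with
  | zero => exact fun _ _ => subset_rfl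
  | succ k ih => exact (hchain k).trans ih

include hX

lemma iterSplit_iInter_of_refines {s : List Bool} (hs : s.length ≤ n) :
    iterSplit (⋂ k, X k) s = ⋂ k, iterSplit (X k) s := by
  induction s using List.reverseRecOn with
  | nil => rfl
  | append_singleton s b ih =>
    have hs' : s.length + 1 ≤ n := by simpa using hs
    simp only [iterSplit_append_singleton]
    rw [ih (by omega)]
    refine (splitPiece_iInter (fun k => (hX k).iterSplit s)
      (fun k => (hchain k).mono (by omega) s rfl) fun k => ?_).2 b
    exact ((refines_zero_of_forall_refines_succ hchain k).mono hs').stemLen_iterSplit_eq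
      (hX k) le_rfl

lemma iInter_iterSplit_nonempty {s : List Bool} (hs : s.length ≤ n) :
    (⋂ k, iterSplit (X k) s).Nonempty :=
  IsCompact.nonempty_iInter_of_sequence_nonempty_isCompact_isClosed _
    (fun k => (hchain k).mono hs s rfl) (fun k => ((hX k).iterSplit s).1)
    ((hX 0).iterSplit s).2.closed.isCompact (fun k => ((hX k).iterSplit s).2.closed)

end ConstantRate

section Fusion

variable {X : ℕ → Set Cantor} {r : ℕ → ℕ} (hX : ∀ k, PerfectSet (X k)) (hr : Monotone r)
  (hchain : ∀ k, refines (r (k + 1)) (X (k + 1)) (X k))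
include hX hr hchain

lemma iterSplit_iInter_eq_iInter_nat_add (m : ℕ) {s : List Bool} (hs : s.length ≤ r (m + 1)) :
    iterSplit (⋂ k, X k) s = ⋂ k, iterSplit (X (m + k)) s := by
  have hanti : Antitone X := antitone_nat_of_succ_le fun k => (hchain k).subset
  have htail : (⋂ k, X k) = ⋂ k, X (m + k) := by
    rw [← Set.iInf_eq_iInter, ← Set.iInf_eq_iInter, ← hanti.iInf_nat_add m]
    simp only [add_comm]
  rw [htail]
  exact iterSplit_iInter_of_refines (fun k => hX (m + k))
    (fun k => (hchain (m + k)).mono (hr (by omega))) hs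

lemma perfectSet_iInter_of_refines (hunb : ∀ c, ∃ k, c ≤ r k) : PerfectSet (⋂ k, X k) := by
  refine perfectSet_of_splitPiece_nonempty (isClosed_iInter fun k => (hX k).2.closed)
    fun s b => ?_
  obtain ⟨m, hm⟩ := hunb (s.length + 1)
  have hs : (s ++ [b]).length ≤ r (m + 1) := by simpa using hm.trans (hr (Nat.le_succ m))
  rw [← iterSplit_append_singleton, iterSplit_iInter_eq_iInter_nat_add hX hr hchain m hs]
  exact iInter_iterSplit_nonempty (fun k => hX (m + k))
    (fun k => (hchain (m + k)).mono (hr (by omega))) hs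

lemma refines_iInter_of_refines (m : ℕ) : refines (r (m + 1)) (⋂ k, X k) (X m) := by
  intro s hs
  rw [iterSplit_iInter_eq_iInter_nat_add hX hr hchain m hs.le]
  exact Set.iInter_subset _ 0

end Fusion

lemma qcount_mono (phi : ℕ → ℕ) (j : ℕ) : Monotone fun m => qcount phi m j :=
  fun _ _ hab => Finset.card_le_card (Finset.filter_subset_filter _ (Finset.range_mono hab))

lemma exists_le_qcount {phi : ℕ → ℕ} {j : ℕ} (h : {k | phi k = j}.Infinite) (c : ℕ) :
    ∃ m, c ≤ qcount phi m j := by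
  obtain ⟨t, ht, rfl⟩ := h.exists_subset_card_eq c
  refine ⟨t.sup id + 1, Finset.card_le_card fun k hk => ?_⟩
  exact Finset.mem_filter.2 ⟨Finset.mem_range.2 (Nat.lt_succ_of_le (Finset.le_sup (f := id) hk)),
    ht hk⟩

/-- fusion for perfect products: if `P_{n+1} ≤_{n+1} Pₙ` for all `n`,
then `Q = ⋂ₙ Pₙ` is a perfect product with `Q(j) = ⋂ₙ Pₙ(j)`, and `Q ≤_{m+1} Pₘ`. -/
theorem stmt5 (phi : ℕ → ℕ) (hphi : ∀ j, {k | phi k = j}.Infinite)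
    (P : ℕ → ℕ → Set Cantor) (hperf : ∀ n, PerfectProduct (P n))
    (hchain : ∀ n, prodRef phi (n + 1) (P (n + 1)) (P n)) :
    PerfectProduct (fun j => ⋂ n, P n j) ∧
    prodSet (fun j => ⋂ n, P n j) = ⋂ n, prodSet (P n) ∧
    ∀ m, prodRef phi (m + 1) (fun j => ⋂ n, P n j) (P m) := by
  refine ⟨fun j => ?_, ?_, fun m j => ?_⟩
  · exact perfectSet_iInter_of_refines (fun k => hperf k j) (qcount_mono phi j)
      (fun k => hchain k j) (exists_le_qcount (hphi j))
  · ext x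
    simp only [prodSet, Set.mem_iInter, Set.mem_ofPred_eq]
    exact forall_comm
  · exact refines_iInter_of_refines (fun k => hperf k j) (qcount_mono phi j)
      (fun k => hchain k j) m
end

section
/- If P ⊆ (2^ℕ)^ω is a perfect product and B ⊆ P is a Borel set, then there exists a perfect product Q ⊆ P such that either Q ⊆ B or Q ∩ B = ∅. -/
namespace Stmt9

open Set

def Agrees (u : List Bool) (x : Cantor) : Prop := ∀ j < u.length, x j = u.getD j false

def Ext (u v : List Bool) : Prop :=
  u.length ≤ v.length ∧ ∀ j < u.length, v.getD j false = u.getD j false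

lemma Ext.refl (u : List Bool) : Ext u u := ⟨le_rfl, fun _ _ => rfl⟩

lemma Ext.trans {u v w : List Bool} (h1 : Ext u v) (h2 : Ext v w) : Ext u w :=
  ⟨h1.1.trans h2.1, fun j hj => (h2.2 j (lt_of_lt_of_le hj h1.1)).trans (h1.2 j hj)⟩

lemma Agrees.mono {u v : List Bool} {x : Cantor} (h : Ext u v) (ha : Agrees v x) : Agrees u x :=
  fun j hj => (ha j (lt_of_lt_of_le hj h.1)).trans (h.2 j hj)

lemma Ext.append (u l : List Bool) : Ext u (u ++ l) := by
  refine ⟨by simp, fun j hj => ?_⟩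
  rw [List.getD_eq_getElem _ _ (by simp; omega), List.getD_eq_getElem _ _ hj]
  simp [List.getElem_append, hj]

lemma getD_ofFn {n : ℕ} (f : Fin n → Bool) (j : ℕ) (h : j < n) :
    (List.ofFn f).getD j false = f ⟨j, h⟩ := by
  rw [List.getD_eq_getElem _ _ (by simpa using h)]
  simp

lemma getD_append_self (u : List Bool) (a : Bool) :
    (u ++ [a]).getD u.length false = a := by
  rw [List.getD_eq_getElem _ _ (by simp)]
  simp

lemma isOpen_agreeCube (m : ℕ) (x : Cantor) : IsOpen {y : Cantor | ∀ j < m, y j = x j} := by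
  have : {y : Cantor | ∀ j < m, y j = x j}
      = ⋂ j ∈ Finset.range m, (fun y : Cantor => y j) ⁻¹' {x j} := by
    ext y; simp
  rw [this]
  exact isOpen_biInter_finset fun j _ =>
    (isOpen_discrete _).preimage (continuous_apply j)

lemma isOpen_agrees (u : List Bool) : IsOpen {x : Cantor | Agrees u x} := by
  have : {x : Cantor | Agrees u x}
      = ⋂ j ∈ Finset.range u.length, (fun y : Cantor => y j) ⁻¹' {u.getD j false} := by
    ext y; simp [Agrees]
  rw [this]
  exact isOpen_biInter_finset fun j _ =>
    (isOpen_discrete _).preimage (continuous_apply j)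

lemma nhd_basicC {V : Set Cantor} (hV : IsOpen V) {x : Cantor} (hx : x ∈ V) :
    ∃ m : ℕ, ∀ y : Cantor, (∀ j < m, y j = x j) → y ∈ V := by
  rcases isOpen_pi_iff.1 hV x hx with ⟨I, w, h1, h2⟩
  refine ⟨I.sup id + 1, fun y hy => h2 ?_⟩
  intro a ha
  have : y a = x a := hy a (Nat.lt_succ_of_le (Finset.le_sup (f := id) ha))
  rw [this]; exact (h1 a ha).2

lemma nhd_basic {U : Set (ℕ → Cantor)} (hU : IsOpen U) {x : ℕ → Cantor} (hx : x ∈ U) :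
    ∃ m : ℕ, ∀ y : ℕ → Cantor, (∀ k < m, ∀ j < m, y k j = x k j) → y ∈ U := by
  rcases isOpen_pi_iff.1 hU x hx with ⟨I, w, h1, h2⟩
  choose mf hmf using fun (k : ℕ) (hk : k ∈ I) => nhd_basicC (h1 k hk).1 (h1 k hk).2
  refine ⟨(I.sup id + 1) ⊔ I.attach.sup (fun k => mf k.1 k.2), fun y hy => h2 ?_⟩
  intro a ha
  have ha1 : a < (I.sup id + 1) ⊔ I.attach.sup (fun k => mf k.1 k.2) :=
    lt_of_lt_of_le (Nat.lt_succ_of_le (Finset.le_sup (f := id) ha)) le_sup_left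
  refine hmf a ha _ (fun j hj => hy a ha1 j (lt_of_lt_of_le hj ?_))
  exact le_trans (Finset.le_sup (f := fun k : {x // x ∈ I} => mf k.1 k.2)
    (Finset.mem_attach _ ⟨a, ha⟩)) le_sup_right

lemma density_ext (u : ℕ → List Bool) (hu : {k | u k ≠ []}.Finite)
    {Dn : Set (ℕ → Cantor)} (hDo : IsOpen Dn) (hDd : Dense Dn) :
    ∃ u' : ℕ → List Bool, (∀ k, Ext (u k) (u' k)) ∧ {k | u' k ≠ []}.Finite ∧
      ∀ x : ℕ → Cantor, (∀ k, Agrees (u' k) (x k)) → x ∈ Dn := by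
  set Bx := {x : ℕ → Cantor | ∀ k, Agrees (u k) (x k)} with hBx
  have hBo : IsOpen Bx := by
    have : Bx = ⋂ k ∈ hu.toFinset, (fun x : ℕ → Cantor => x k) ⁻¹' {y | Agrees (u k) y} := by
      ext x
      simp only [hBx, mem_setOf_eq, mem_iInter, Set.Finite.mem_toFinset, mem_preimage]
      constructor
      · exact fun h k _ => h k
      · intro h k
        by_cases hk : u k = []
        · intro j hj; rw [hk] at hj; simp at hj
        · exact h k hk
    rw [this]
    exact isOpen_biInter_finset fun k _ => (isOpen_agrees (u k)).preimage (continuous_apply k)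
  have hBne : Bx.Nonempty := by
    refine ⟨fun k j => (u k).getD j false, fun k j hj => rfl⟩
  obtain ⟨z, hzB, hzD⟩ := hDd.inter_open_nonempty Bx hBo hBne
  obtain ⟨m, hm⟩ := nhd_basic (hBo.inter hDo) (Set.mem_inter hzB hzD)
  classical
  refine ⟨fun k => if k < m then List.ofFn (fun j : Fin (max m (u k).length) => z k j) else u k,
    ?_, ?_, ?_⟩
  · intro k
    by_cases hk : k < m
    · simp only [hk, if_true]
      refine ⟨by simp, fun j hj => ?_⟩
      rw [getD_ofFn _ j (lt_of_lt_of_le hj (le_max_right _ _))]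
      exact hzB k j hj
    · simp only [hk, if_false]; exact Ext.refl _
  · apply Set.Finite.subset ((Set.finite_Iio m).union hu)
    intro k hk
    simp only [mem_setOf_eq] at hk
    by_cases h : k < m
    · exact Or.inl h
    · right; simp only [h, if_false] at hk; exact hk
  · intro x hx
    refine (hm x fun k hk j hj => ?_).2
    have hlen : j < (List.ofFn (fun j : Fin (max m (u k).length) => z k j)).length := by
      simp; omega
    have := hx k
    simp only [hk, if_true] at this
    rw [this j hlen, getD_ofFn _ j (by omega)]


/-- The state of the fusion construction: for each coordinate `k` and each
branch `b`, the current finite approximation (node). -/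
def State := ℕ → Cantor → List Bool

/-- At stage `n`, the node of coordinate `k` depends only on the first `n - k` bits. -/
def Dep (n : ℕ) (G : State) : Prop :=
  ∀ k (b b' : Cantor), (∀ j, j + k < n → b j = b' j) → G k b = G k b'

def FinU (G : State) : Prop := {k | ∃ b, G k b ≠ []}.Finite

def Len (n : ℕ) (G : State) : Prop := ∀ k b, n ≤ (G k b).length + k

def Good (n : ℕ) (G : State) : Prop := Dep n G ∧ FinU G ∧ Len n G

/-- canonical configuration attached to a finite matrix -/
def toFun (n : ℕ) (f : Fin (n+1) → Fin (n+1) → Bool) : ℕ → Cantor := fun k j =>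
  if hk : k < n+1 then (if hj : j < n+1 then f ⟨k, hk⟩ ⟨j, hj⟩ else false) else false

lemma toFun_covers (n : ℕ) (c : ℕ → Cantor) :
    ∃ f : Fin (n+1) → Fin (n+1) → Bool, ∀ k j, j + k < n + 1 → toFun n f k j = c k j := by
  refine ⟨fun k j => c k j, fun k j h => ?_⟩
  have hk : k < n + 1 := by omega
  have hj : j < n + 1 := by omega
  simp [toFun, hk, hj]

/-- process a list of configurations for the dense open set `Dn` -/
lemma process (n : ℕ) {Dn : Set (ℕ → Cantor)} (hDo : IsOpen Dn) (hDd : Dense Dn) :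
    ∀ (L : List (Fin (n+1) → Fin (n+1) → Bool)) (G : State), Dep (n+1) G → FinU G →
    ∃ G' : State, Dep (n+1) G' ∧ FinU G' ∧ (∀ k b, Ext (G k b) (G' k b)) ∧
      ∀ f ∈ L, ∀ x : ℕ → Cantor, (∀ k, Agrees (G' k (toFun n f k)) (x k)) → x ∈ Dn := by
  intro L
  induction L with
  | nil => exact fun G hdep hfin => ⟨G, hdep, hfin, fun k b => Ext.refl _, by simp⟩
  | cons f L ih =>
    intro G hdep hfin
    classical
    obtain ⟨u', hext, hfin', hbox⟩ := density_ext (fun k => G k (toFun n f k))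
      (hfin.subset (fun k hk => ⟨toFun n f k, hk⟩)) hDo hDd
    set G₂ : State := fun k b =>
      if ∀ j, j + k < n + 1 → b j = toFun n f k j then u' k else G k b with hG₂
    have hdep2 : Dep (n+1) G₂ := by
      intro k b b' hbb
      simp only [hG₂]
      by_cases h : ∀ j, j + k < n + 1 → b j = toFun n f k j
      · have h' : ∀ j, j + k < n + 1 → b' j = toFun n f k j :=
          fun j hj => (hbb j hj).symm.trans (h j hj)
        rw [if_pos h, if_pos h']
      · have h' : ¬ ∀ j, j + k < n + 1 → b' j = toFun n f k j := by
          intro h'; exact h fun j hj => (hbb j hj).trans (h' j hj)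
        rw [if_neg h, if_neg h']
        exact hdep k b b' hbb
    have hfin2 : FinU G₂ := by
      apply (hfin.union hfin').subset
      rintro k ⟨b, hb⟩
      simp only [hG₂] at hb
      by_cases h : ∀ j, j + k < n + 1 → b j = toFun n f k j
      · rw [if_pos h] at hb; exact Or.inr hb
      · rw [if_neg h] at hb; exact Or.inl ⟨b, hb⟩
    have hext2 : ∀ k b, Ext (G k b) (G₂ k b) := by
      intro k b
      simp only [hG₂]
      by_cases h : ∀ j, j + k < n + 1 → b j = toFun n f k j
      · rw [if_pos h]
        have : G k b = G k (toFun n f k) := hdep k b (toFun n f k) h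
        rw [this]; exact hext k
      · rw [if_neg h]; exact Ext.refl _
    obtain ⟨G', hdep', hfinU', hext', hbox'⟩ := ih G₂ hdep2 hfin2
    have hmain : ∀ x : ℕ → Cantor, (∀ k, Agrees (G' k (toFun n f k)) (x k)) → x ∈ Dn := by
      intro x hx
      apply hbox
      intro k
      refine Agrees.mono ?_ (hx k)
      have h0 : G₂ k (toFun n f k) = u' k := by
        simp only [hG₂]
        rw [if_pos]
        intro j _
        trivial
      rw [← h0]; exact hext' k _
    refine ⟨G', hdep', hfinU', fun k b => (hext2 k b).trans (hext' k b), ?_⟩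
    intro f' hf'
    rcases List.mem_cons.1 hf' with hf' | hf'
    · subst hf'; exact hmain
    · exact hbox' f' hf'

/-- Link between consecutive stages. -/
def Link (Dn : Set (ℕ → Cantor)) (n : ℕ) (G G' : State) : Prop :=
  (∀ k b, Ext (G k b) (G' k b)) ∧
  (∀ k b, k ≤ n → (G k b).length < (G' k b).length ∧
      (G' k b).getD (G k b).length false = b (n - k)) ∧
  (∀ c x : ℕ → Cantor, (∀ k, Agrees (G' k (c k)) (x k)) → x ∈ Dn)

lemma step_exists (n : ℕ) (G : State) (hG : Good n G) {Dn : Set (ℕ → Cantor)}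
    (hDo : IsOpen Dn) (hDd : Dense Dn) :
    ∃ G', Good (n+1) G' ∧ Link Dn n G G' := by
  obtain ⟨hdep, hfin, hlen⟩ := hG
  classical
  set G₁ : State := fun k b => if k ≤ n then G k b ++ [b (n - k)] else G k b with hG₁
  have hdep1 : Dep (n+1) G₁ := by
    intro k b b' hbb
    have hGe : G k b = G k b' := hdep k b b' (fun j hj => hbb j (by omega))
    simp only [hG₁]
    by_cases hk : k ≤ n
    · rw [if_pos hk, if_pos hk, hGe, hbb (n - k) (by omega)]
    · rw [if_neg hk, if_neg hk, hGe]
  have hfin1 : FinU G₁ := by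
    apply (hfin.union (Set.finite_Iic n)).subset
    rintro k ⟨b, hb⟩
    simp only [hG₁] at hb
    by_cases hk : k ≤ n
    · exact Or.inr hk
    · rw [if_neg hk] at hb; exact Or.inl ⟨b, hb⟩
  have hext1 : ∀ k b, Ext (G k b) (G₁ k b) := by
    intro k b
    simp only [hG₁]
    by_cases hk : k ≤ n
    · rw [if_pos hk]; exact Ext.append _ _
    · rw [if_neg hk]; exact Ext.refl _
  have hlen1 : Len (n+1) G₁ := by
    intro k b
    simp only [hG₁]
    by_cases hk : k ≤ n
    · rw [if_pos hk]; simp; have := hlen k b; omega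
    · rw [if_neg hk]; have := hlen k b; omega
  obtain ⟨G', hdep', hfin', hext', hbox'⟩ :=
    process n hDo hDd (Finset.univ.toList) G₁ hdep1 hfin1
  refine ⟨G', ⟨hdep', hfin', fun k b => le_trans (hlen1 k b) (by have := (hext' k b).1; omega)⟩,
    fun k b => (hext1 k b).trans (hext' k b), ?_, ?_⟩
  · intro k b hk
    have hlenG1 : (G₁ k b).length = (G k b).length + 1 := by
      simp only [hG₁, if_pos hk]; simp
    have h1 : (G k b).length < (G' k b).length := by
      have := (hext' k b).1; omega
    refine ⟨h1, ?_⟩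
    have h2 : (G' k b).getD (G k b).length false = (G₁ k b).getD (G k b).length false :=
      (hext' k b).2 _ (by omega)
    rw [h2]
    simp only [hG₁, if_pos hk]
    exact getD_append_self _ _
  · intro c x hx
    obtain ⟨f, hf⟩ := toFun_covers n c
    have : ∀ k, G' k (toFun n f k) = G' k (c k) := fun k => hdep' k _ _ (fun j hj => hf k j hj)
    refine hbox' f (by simp [Finset.mem_toList]) x (fun k => ?_)
    rw [this k]; exact hx k


section Fusion

local notation "FArgs" => 0

lemma good0 (t : ℕ → List Bool) (ht : {k | t k ≠ []}.Finite) : Good 0 (fun k _ => t k) := by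
  refine ⟨fun k b b' _ => rfl, ?_, fun k b => by omega⟩
  apply ht.subset
  rintro k ⟨b, hb⟩
  exact hb

noncomputable def seq (t : ℕ → List Bool) (ht : {k | t k ≠ []}.Finite)
    (D : ℕ → Set (ℕ → Cantor)) (hDo : ∀ n, IsOpen (D n)) (hDd : ∀ n, Dense (D n)) :
    (n : ℕ) → {G : State // Good n G}
  | 0 => ⟨fun k _ => t k, good0 t ht⟩
  | n+1 => ⟨(step_exists n (seq t ht D hDo hDd n).1 (seq t ht D hDo hDd n).2 (hDo n) (hDd n)).choose,
      (step_exists n (seq t ht D hDo hDd n).1 (seq t ht D hDo hDd n).2 (hDo n) (hDd n)).choose_spec.1⟩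

variable (t : ℕ → List Bool) (ht : {k | t k ≠ []}.Finite)
variable (D : ℕ → Set (ℕ → Cantor)) (hDo : ∀ n, IsOpen (D n)) (hDd : ∀ n, Dense (D n))

lemma seq_link (n : ℕ) :
    Link (D n) n (seq t ht D hDo hDd n).1 (seq t ht D hDo hDd (n+1)).1 :=
  (step_exists n (seq t ht D hDo hDd n).1 (seq t ht D hDo hDd n).2
    (hDo n) (hDd n)).choose_spec.2

/-- node approximations -/
noncomputable def node (n k : ℕ) (b : Cantor) : List Bool := (seq t ht D hDo hDd n).1 k b

lemma node_ext {n m : ℕ} (h : n ≤ m) (k : ℕ) (b : Cantor) :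
    Ext (node t ht D hDo hDd n k b) (node t ht D hDo hDd m k b) := by
  induction m with
  | zero => have : n = 0 := by omega
            subst this; exact Ext.refl _
  | succ m ih =>
    rcases Nat.lt_or_ge n (m+1) with h' | h'
    · exact (ih (by omega)).trans ((seq_link t ht D hDo hDd m).1 k b)
    · have : n = m + 1 := by omega
      subst this; exact Ext.refl _

lemma node_len (n k : ℕ) (b : Cantor) : n ≤ (node t ht D hDo hDd n k b).length + k :=
  (seq t ht D hDo hDd n).2.2.2 k b

lemma node_dep (n k : ℕ) (b b' : Cantor) (h : ∀ j, j + k < n → b j = b' j) :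
    node t ht D hDo hDd n k b = node t ht D hDo hDd n k b' :=
  (seq t ht D hDo hDd n).2.1 k b b' h

/-- the limit function for coordinate `k` -/
noncomputable def glim (k : ℕ) (b : Cantor) : Cantor :=
  fun j => (node t ht D hDo hDd (j + k + 1) k b).getD j false

lemma glim_stable (k : ℕ) (b : Cantor) (n j : ℕ) (h : j < (node t ht D hDo hDd n k b).length) :
    glim t ht D hDo hDd k b j = (node t ht D hDo hDd n k b).getD j false := by
  rcases Nat.le_total n (j + k + 1) with h' | h'
  · exact ((node_ext t ht D hDo hDd h' k b).2 j h)
  · have hj : j < (node t ht D hDo hDd (j + k + 1) k b).length := by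
      have := node_len t ht D hDo hDd (j + k + 1) k b; omega
    exact ((node_ext t ht D hDo hDd h' k b).2 j hj).symm

lemma glim_agrees (n k : ℕ) (b : Cantor) : Agrees (node t ht D hDo hDd n k b) (glim t ht D hDo hDd k b) :=
  fun j hj => glim_stable t ht D hDo hDd k b n j hj

lemma glim_continuous (k : ℕ) : Continuous (glim t ht D hDo hDd k) := by
  apply continuous_pi
  intro j
  apply IsLocallyConstant.continuous
  rw [IsLocallyConstant.iff_exists_open]
  intro b
  refine ⟨{b' : Cantor | ∀ i < j + k + 1, b' i = b i}, isOpen_agreeCube _ _,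
    fun i _ => rfl, ?_⟩
  intro b' hb'
  show glim t ht D hDo hDd k b' j = glim t ht D hDo hDd k b j
  unfold glim
  rw [node_dep t ht D hDo hDd (j + k + 1) k b' b (fun i hi => hb' i (by omega))]

lemma glim_injective (k : ℕ) : Function.Injective (glim t ht D hDo hDd k) := by
  intro b b' hbb
  by_contra hne
  have hex : ∃ p, b p ≠ b' p := by
    by_contra h
    push_neg at h
    exact hne (funext h)
  classical
  set p := Nat.find hex with hpdef
  have hp : b p ≠ b' p := Nat.find_spec hex
  have hmin : ∀ i < p, b i = b' i := fun i hi => by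
    by_contra h
    exact absurd (Nat.find_le h) (Nat.not_le.mpr hi)
  set n := k + p with hn
  have hnode : node t ht D hDo hDd n k b = node t ht D hDo hDd n k b' :=
    node_dep t ht D hDo hDd n k b b' (fun j hj => hmin j (by omega))
  obtain ⟨hl, hbit⟩ := (seq_link t ht D hDo hDd n).2.1 k b (by omega)
  obtain ⟨hl', hbit'⟩ := (seq_link t ht D hDo hDd n).2.1 k b' (by omega)
  set pos := (node t ht D hDo hDd n k b).length with hpos
  have hl2 : pos < (node t ht D hDo hDd (n+1) k b).length := hl
  have hbit2 : (node t ht D hDo hDd (n+1) k b).getD pos false = b (n - k) := hbit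
  have hl'2 : pos < (node t ht D hDo hDd (n+1) k b').length := by
    rw [hpos, hnode]; exact hl'
  have hbit'2 : (node t ht D hDo hDd (n+1) k b').getD pos false = b' (n - k) := by
    rw [hpos, hnode]; exact hbit'
  have e1 : glim t ht D hDo hDd k b pos = b p := by
    rw [glim_stable t ht D hDo hDd k b (n+1) pos hl2, hbit2]
    congr 1
    omega
  have e2 : glim t ht D hDo hDd k b' pos = b' p := by
    rw [glim_stable t ht D hDo hDd k b' (n+1) pos hl'2, hbit'2]
    congr 1
    omega
  rw [hbb] at e1
  exact hp (e1.symm.trans e2)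

theorem fusion (t : ℕ → List Bool) (ht : {k | t k ≠ []}.Finite)
    (D : ℕ → Set (ℕ → Cantor)) (hDo : ∀ n, IsOpen (D n)) (hDd : ∀ n, Dense (D n)) :
    ∃ g : ℕ → Cantor → Cantor, (∀ k, Continuous (g k)) ∧ (∀ k, Function.Injective (g k)) ∧
      (∀ k b, Agrees (t k) (g k b)) ∧
      (∀ x : ℕ → Cantor, (∀ k, x k ∈ Set.range (g k)) → ∀ n, x ∈ D n) := by
  refine ⟨glim t ht D hDo hDd, glim_continuous t ht D hDo hDd, glim_injective t ht D hDo hDd,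
    fun k b => glim_agrees t ht D hDo hDd 0 k b, ?_⟩
  intro x hx n
  choose b hb using hx
  apply (seq_link t ht D hDo hDd n).2.2 b
  intro k
  rw [← hb k]
  exact glim_agrees t ht D hDo hDd (n+1) k (b k)

end Fusion

lemma rangePerfect (f : Cantor → Cantor) (hc : Continuous f) (hi : Function.Injective f) :
    PerfectSet (Set.range f) := by
  refine ⟨Set.range_nonempty f, ⟨(hc.isClosedEmbedding hi).isClosed_range, ?_⟩⟩
  rintro x ⟨b, rfl⟩
  rw [accPt_iff_nhds]
  intro U hU
  have hpre : f ⁻¹' U ∈ nhds b := hc.continuousAt.preimage_mem_nhds hU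
  obtain ⟨V, hVsub, hVo, hbV⟩ := mem_nhds_iff.1 hpre
  obtain ⟨m, hm⟩ := nhd_basicC hVo hbV
  set b' : Cantor := Function.update b m (!(b m)) with hb'
  have hb'agree : ∀ j < m, b' j = b j := by
    intro j hj
    simp [hb', Function.update_of_ne (by omega : j ≠ m)]
  have hb'ne : b' ≠ b := by
    intro h
    have := congrFun h m
    simp [hb'] at this
  exact ⟨f b', ⟨hVsub (hm b' hb'agree), Set.mem_range_self b'⟩, fun h => hb'ne (hi h)⟩

lemma residual_seq {s : Set (ℕ → Cantor)} (hs : s ∈ residual (ℕ → Cantor)) :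
    ∃ D : ℕ → Set (ℕ → Cantor), (∀ n, IsOpen (D n)) ∧ (∀ n, Dense (D n)) ∧ ⋂ n, D n ⊆ s := by
  rw [mem_residual_iff] at hs
  obtain ⟨S, hSo, hSd, hSc, hSs⟩ := hs
  rcases S.eq_empty_or_nonempty with rfl | hne
  · refine ⟨fun _ => univ, fun _ => isOpen_univ, fun _ => dense_univ, ?_⟩
    simpa using hSs
  · obtain ⟨f, rfl⟩ := hSc.exists_eq_range hne
    refine ⟨f, fun n => hSo _ (mem_range_self n), fun n => hSd _ (mem_range_self n), ?_⟩
    rw [sInter_range] at hSs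
    exact hSs


end Stmt9

open Stmt9 Set Topology in
/-- for a perfect product `P` and a Borel set `B ⊆ P`, there is a
perfect product `Q ⊆ P` with `Q ⊆ B` or `Q ∩ B = ∅`. -/
theorem stmt9 (P : ℕ → Set Cantor) (hP : PerfectProduct P)
    (B : Set (ℕ → Cantor)) (hB : MeasurableSet B) (hBP : B ⊆ prodSet P) :
    ∃ Q : ℕ → Set Cantor, PerfectProduct Q ∧ prodSet Q ⊆ prodSet P ∧
      (prodSet Q ⊆ B ∨ prodSet Q ∩ B = ∅) := by
  classical
  -- coordinatewise embeddings of Cantor space into the perfect sets `P k`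
  have hek : ∀ k, ∃ e : Cantor → Cantor,
      Set.range e ⊆ P k ∧ Continuous e ∧ Function.Injective e := by
    intro k
    letI : MetricSpace Cantor := PiNat.metricSpaceOfDiscreteUniformity (fun _ => rfl)
    exact (hP k).2.exists_nat_bool_injection (hP k).1
  choose e he hec hei using hek
  set E : (ℕ → Cantor) → (ℕ → Cantor) := fun y k => e k (y k) with hE
  have hEc : Continuous E := continuous_pi fun k => (hec k).comp (continuous_apply k)
  set A : Set (ℕ → Cantor) := E ⁻¹' B with hA
  have hAm : MeasurableSet A := hB.preimage hEc.measurable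
  obtain ⟨U, hUo, hAU⟩ := hAm.baireMeasurableSet.residualEq_isOpen
  -- helper to build the final product from fusion data
  have build : ∀ g : ℕ → Cantor → Cantor, (∀ k, Continuous (g k)) →
      (∀ k, Function.Injective (g k)) →
      ∃ Q : ℕ → Set Cantor, PerfectProduct Q ∧ prodSet Q ⊆ prodSet P ∧
        Q = fun k => Set.range (e k ∘ g k) := by
    intro g hgc hgi
    refine ⟨fun k => Set.range (e k ∘ g k), ?_, ?_, rfl⟩
    · intro k
      exact rangePerfect _ ((hec k).comp (hgc k)) ((hei k).comp (hgi k))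
    · intro x hx k
      obtain ⟨b, hb⟩ := hx k
      rw [← hb]
      exact he k (Set.mem_range_self _)
  rcases U.eq_empty_or_nonempty with rfl | ⟨x₀, hx₀⟩
  · -- A is meager: get a product disjoint from B
    have hres : Aᶜ ∈ residual (ℕ → Cantor) := by
      filter_upwards [hAU] with x hx
      intro hxA
      exact Set.notMem_empty x (Eq.mp hx hxA)
    obtain ⟨D, hDo, hDd, hDs⟩ := residual_seq hres
    obtain ⟨g, hgc, hgi, -, hgD⟩ := fusion (fun _ => []) (by simp) D hDo hDd
    obtain ⟨Q, hQperf, hQsub, hQeq⟩ := build g hgc hgi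
    refine ⟨Q, hQperf, hQsub, Or.inr ?_⟩
    rw [Set.eq_empty_iff_forall_notMem]
    rintro x ⟨hxQ, hxB⟩
    have hxk : ∀ k, ∃ b, e k (g k b) = x k := by
      intro k
      have := hxQ k
      rw [hQeq] at this
      exact this
    choose b hb using hxk
    have hyA : (fun k => g k (b k)) ∈ A := by
      rw [hA]
      show E (fun k => g k (b k)) ∈ B
      have : E (fun k => g k (b k)) = x := funext fun k => hb k
      rwa [this]
    have hyC : (fun k => g k (b k)) ∈ ⋂ n, D n :=
      Set.mem_iInter.2 (hgD _ (fun k => Set.mem_range_self _))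
    exact (hDs hyC) hyA
  · -- A is comeager in the nonempty open set U : get a product inside B
    have hres : (U \ A)ᶜ ∈ residual (ℕ → Cantor) := by
      filter_upwards [hAU] with x hx
      rintro ⟨hxU, hxA⟩
      exact hxA (Eq.mpr hx hxU)
    obtain ⟨m, hm⟩ := nhd_basic hUo hx₀
    set t : ℕ → List Bool := fun k =>
      if k < m then List.ofFn (fun j : Fin m => x₀ k j) else [] with htdef
    have ht : {k | t k ≠ []}.Finite := by
      apply (Set.finite_Iio m).subset
      intro k hk
      simp only [mem_setOf_eq, htdef] at hk
      by_contra h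
      simp only [Set.mem_Iio] at h
      rw [if_neg h] at hk
      exact hk rfl
    obtain ⟨D, hDo, hDd, hDs⟩ := residual_seq hres
    obtain ⟨g, hgc, hgi, hgt, hgD⟩ := fusion t ht D hDo hDd
    obtain ⟨Q, hQperf, hQsub, hQeq⟩ := build g hgc hgi
    refine ⟨Q, hQperf, hQsub, Or.inl ?_⟩
    intro x hxQ
    have hxk : ∀ k, ∃ b, e k (g k b) = x k := by
      intro k
      have := hxQ k
      rw [hQeq] at this
      exact this
    choose b hb using hxk
    set y : ℕ → Cantor := fun k => g k (b k) with hy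
    have hyU : y ∈ U := by
      apply hm
      intro k hk j hj
      show g k (b k) j = x₀ k j
      have hag := hgt k (b k)
      have hlen : (t k).length = m := by
        simp [htdef, if_pos hk]
      have := hag j (by rw [hlen]; exact hj)
      rw [this, htdef]
      simp only [if_pos hk]
      rw [getD_ofFn _ j hj]
    have hyC : y ∈ ⋂ n, D n := Set.mem_iInter.2 (hgD _ (fun k => Set.mem_range_self _))
    have hyA : y ∈ A := by
      by_contra hyA
      exact (hDs hyC) ⟨hyU, hyA⟩
    have : E y = x := funext fun k => hb k
    rw [← this]
    exact hyA
end

section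
/- If P ⊆ (2^ℕ)^ω is a perfect product and f: P → 2^ℕ is a Borel map, then there exists a perfect product Q ⊆ P such that the restriction f ↾ Q is continuous. -/
open Set Filter Function Topology TopologicalSpace PiNat

section Cylinders

variable {E : ℕ → Type*}

theorem PiNat.cylinder_subset_cylinder_of_mem {x y : ∀ n, E n} {m n : ℕ} (hnm : n ≤ m)
    (hy : y ∈ cylinder x m) : cylinder x m ⊆ cylinder y n := by
  rw [← mem_cylinder_iff_eq.1 hy]
  exact cylinder_anti y hnm

variable [∀ n, TopologicalSpace (E n)] [∀ n, DiscreteTopology (E n)]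

theorem PiNat.isClopen_cylinder (x : ∀ n, E n) (n : ℕ) : IsClopen (cylinder x n) := by
  refine ⟨?_, isOpen_cylinder E x n⟩
  rw [cylinder_eq_pi]
  exact isClosed_set_pi fun i _ => isClosed_discrete _

theorem PiNat.exists_cylinder_subset {x : ∀ n, E n} {U : Set (∀ n, E n)} (hU : U ∈ 𝓝 x) :
    ∃ n, cylinder x n ⊆ U := by
  obtain ⟨_, ⟨y, n, rfl⟩, hx, hsub⟩ := (isTopologicalBasis_cylinders E).mem_nhds_iff.1 hU
  exact ⟨n, mem_cylinder_iff_eq.1 hx ▸ hsub⟩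

theorem PiNat.exists_forall_lt_cylinder_subset {z : ℕ → ∀ n, E n} {U : Set (ℕ → ∀ n, E n)}
    (hU : U ∈ 𝓝 z) : ∃ L, {y | ∀ k < L, y k ∈ cylinder (z k) L} ⊆ U := by
  rw [nhds_pi, Filter.mem_pi'] at hU
  obtain ⟨I, t, ht, hsub⟩ := hU
  choose l hl using fun k => exists_cylinder_subset (ht k)
  refine ⟨I.sup fun k => max (k + 1) (l k), fun y hy => hsub fun k hk => hl k ?_⟩
  have hle := Finset.le_sup (f := fun k => max (k + 1) (l k)) hk
  exact cylinder_anti _ (le_of_max_le_right hle) (hy k (le_of_max_le_left hle))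

theorem Preperfect.exists_disjoint_cylinders {C W : Set (∀ n, E n)} (hC : Preperfect C)
    (hW : IsOpen W) (hCW : (C ∩ W).Nonempty) (N : ℕ) :
    ∃ (x : Bool → ∀ n, E n) (m : ℕ), N ≤ m ∧ Pairwise (Disjoint on fun c => cylinder (x c) m) ∧
      ∀ c, x c ∈ C ∧ cylinder (x c) m ⊆ W := by
  obtain ⟨x, hxC, hxW⟩ := hCW
  obtain ⟨m₀, hm₀⟩ := exists_cylinder_subset (hW.mem_nhds hxW)
  obtain ⟨y, ⟨hyx, hyC⟩, hne⟩ := preperfect_iff_nhds.1 hC x hxC _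
    ((isOpen_cylinder E x m₀).mem_nhds (self_mem_cylinder x m₀))
  have hdisj : Disjoint (cylinder x (firstDiff y x + 1)) (cylinder y (firstDiff y x + 1)) :=
    disjoint_left.2 fun z hzx hzy => apply_firstDiff_ne hne <|
      (hzy _ (Nat.lt_succ_self _)).symm.trans (hzx _ (Nat.lt_succ_self _))
  refine ⟨fun c => cond c y x, max N (max m₀ (firstDiff y x + 1)), le_max_left _ _, ?_, ?_⟩
  · have hm : firstDiff y x + 1 ≤ max N (max m₀ (firstDiff y x + 1)) := by omega
    have h := hdisj.mono (cylinder_anti x hm) (cylinder_anti y hm)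
    rintro (_ | _) (_ | _) hne
    exacts [absurd rfl hne, h, h.symm, absurd rfl hne]
  · rintro (_ | _)
    · exact ⟨hxC, (cylinder_anti x (by omega)).trans hm₀⟩
    · exact ⟨hyC, (cylinder_anti y (by omega)).trans (mem_cylinder_iff_eq.1 hyx ▸ hm₀)⟩

end Cylinders

theorem isClosed_iUnion_of_eq_of_forall_lt {X : Type*} [TopologicalSpace X]
    {F : (ℕ → Bool) → Set X} {n : ℕ} (hF : ∀ b b', (∀ i < n, b i = b' i) → F b = F b')
    (hc : ∀ b, IsClosed (F b)) : IsClosed (⋃ b, F b) := by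
  let extend (v : Fin n → Bool) : ℕ → Bool := fun i => if h : i < n then v ⟨i, h⟩ else false
  have : (⋃ b, F b) = ⋃ v, F (extend v) := by
    refine subset_antisymm (iUnion_subset fun b => ?_) (iUnion_subset fun v => subset_iUnion _ _)
    rw [hF b (extend fun i => b i) fun i hi => by simp [extend, hi]]
    exact subset_iUnion (fun v => F (extend v)) fun i => b i
  rw [this]
  exact isClosed_iUnion_of_finite fun v => hc _

theorem exists_isOpen_dense_seq_of_mem_residual {X : Type*} [TopologicalSpace X] {C : Set X}
    (hC : C ∈ residual X) :
    ∃ U : ℕ → Set X, (∀ n, IsOpen (U n)) ∧ (∀ n, Dense (U n)) ∧ ⋂ n, U n ⊆ C := by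
  obtain ⟨S, hSo, hSd, hSc, hSC⟩ := mem_residual_iff.1 hC
  obtain ⟨U, hU⟩ := (hSc.insert univ).exists_eq_range (insert_nonempty _ _)
  have hUS (n : ℕ) : U n ∈ insert univ S := hU ▸ mem_range_self n
  refine ⟨U, fun n => ?_, fun n => ?_, fun x hx => hSC fun s hs => ?_⟩
  · rcases hUS n with h | h
    · exact h ▸ isOpen_univ
    · exact hSo _ h
  · rcases hUS n with h | h
    · exact h ▸ dense_univ
    · exact hSd _ h
  · obtain ⟨n, rfl⟩ : s ∈ range U := hU ▸ mem_insert_of_mem _ hs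
    exact mem_iInter.1 hx n

theorem Measurable.exists_mem_residual_continuousOn {X Y : Type*} [TopologicalSpace X]
    [MeasurableSpace X] [BorelSpace X] [TopologicalSpace Y] [SecondCountableTopology Y]
    [MeasurableSpace Y] [OpensMeasurableSpace Y] {g : X → Y} (hg : Measurable g) :
    ∃ C ∈ residual X, ContinuousOn g C := by
  have := (countable_countableBasis Y).to_subtype
  choose U hUo hgU using fun u : countableBasis Y =>
    (hg (isOpen_of_mem_countableBasis u.2).measurableSet).residualEq_isOpen
  refine ⟨⋂ u : countableBasis Y, {x | g x ∈ (u : Set Y) ↔ x ∈ U u}, ?_, fun x hx => ?_⟩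
  · refine countable_iInter_mem.2 fun u => ?_
    filter_upwards [hgU u] with x hx using Iff.of_eq hx
  · rw [mem_iInter] at hx
    refine ((isBasis_countableBasis Y).nhds_hasBasis.tendsto_right_iff).2 fun u ⟨hu, hxu⟩ => ?_
    refine mem_nhdsWithin.2 ⟨U ⟨u, hu⟩, hUo _, (hx ⟨u, hu⟩).1 hxu, fun y ⟨hyU, hyC⟩ => ?_⟩
    exact (mem_iInter.1 hyC ⟨u, hu⟩).2 hyU

namespace Fusion

abbrev Scheme := ℕ → (ℕ → Bool) → Set Cantor

/-- `B k b` is the piece of coordinate `k` selected by the branch `b`. At stage `n` it depends only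
on the first `n` bits of `b`, and only for `k < n`: the first `n` coordinates carry `2 ^ n`
pieces each, the others a single one. -/
structure IsStage (P : ℕ → Set Cantor) (n : ℕ) (B : Scheme) : Prop where
  isClopen : ∀ k b, IsClopen (B k b)
  nonempty : ∀ k b, (P k ∩ B k b).Nonempty
  eq_of_agree : ∀ k b b', (k < n → ∀ i < n, b i = b' i) → B k b = B k b'
  eventually_univ : ∃ K, ∀ k ≥ K, ∀ b, B k b = univ

structure Splits (n : ℕ) (B : Scheme) : Prop where
  disjoint : ∀ k ≤ n, ∀ b b', (∀ i < n, b i = b' i) → b n ≠ b' n → Disjoint (B k b) (B k b')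
  subset_cylinder : ∀ k ≤ n, ∀ b, ∀ x ∈ B k b, B k b ⊆ cylinder x n

def box (P : ℕ → Set Cantor) (B : Scheme) (t : ℕ → ℕ → Bool) : Set (ℕ → Cantor) :=
  prodSet fun k => P k ∩ B k (t k)

variable {P : ℕ → Set Cantor} {n : ℕ} {B B' : Scheme}

theorem Splits.mono (h : Splits n B) (hle : B' ≤ B) : Splits n B' where
  disjoint k hk b b' hag hne := (h.disjoint k hk b b' hag hne).mono (hle k b) (hle k b')
  subset_cylinder k hk b x hx := (hle k b).trans (h.subset_cylinder k hk b x (hle k b hx))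

theorem box_mono (hle : B' ≤ B) (t : ℕ → ℕ → Bool) : box P B' t ⊆ box P B t :=
  fun _ hy k => ⟨(hy k).1, hle k (t k) (hy k).2⟩

theorem isStage_zero (hP : ∀ k, (P k).Nonempty) : IsStage P 0 fun _ _ => univ where
  isClopen _ _ := isClopen_univ
  nonempty k _ := by simpa using hP k
  eq_of_agree _ _ _ _ := rfl
  eventually_univ := ⟨0, fun _ _ _ => rfl⟩

theorem IsStage.box_eq_of_agree (hB : IsStage P n B) {t t' : ℕ → ℕ → Bool}
    (h : ∀ k < n, ∀ i < n, t k i = t' k i) : box P B t = box P B t' := by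
  have : ∀ k, B k (t k) = B k (t' k) := fun k => hB.eq_of_agree k _ _ (h k)
  simp only [box, this]

theorem IsStage.exists_splits (hB : IsStage P n B) (hP : ∀ k, Preperfect (P k)) :
    ∃ B' ≤ B, IsStage P (n + 1) B' ∧ Splits n B' := by
  classical
  have hsplit : ∀ k (W : Set Cantor), ∃ (x : Bool → Cantor) (m : ℕ), IsOpen W →
      (P k ∩ W).Nonempty → n ≤ m ∧ Pairwise (Disjoint on fun c => cylinder (x c) m) ∧
        ∀ c, x c ∈ P k ∧ cylinder (x c) m ⊆ W := by
    intro k W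
    by_cases h : IsOpen W ∧ (P k ∩ W).Nonempty
    · obtain ⟨x, m, hxm⟩ := (hP k).exists_disjoint_cylinders h.1 h.2 n
      exact ⟨x, m, fun _ _ => hxm⟩
    · exact ⟨default, 0, fun hW hPW => absurd ⟨hW, hPW⟩ h⟩
  choose x m hxm using hsplit
  have hxm' k b := hxm k (B k b) (hB.isClopen k b).isOpen (hB.nonempty k b)
  refine ⟨fun k b => if k ≤ n then cylinder (x k (B k b) (b n)) (m k (B k b)) else B k b,
    fun k b => ?_, ⟨fun k b => ?_, fun k b => ?_, fun k b b' h => ?_, ?_⟩, ⟨?_, ?_⟩⟩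
  · beta_reduce
    split_ifs
    exacts [((hxm' k b).2.2 (b n)).2, le_rfl]
  · split_ifs
    exacts [isClopen_cylinder _ _, hB.isClopen k b]
  · split_ifs
    exacts [⟨_, ((hxm' k b).2.2 (b n)).1, self_mem_cylinder _ _⟩, hB.nonempty k b]
  · split_ifs with hk
    · have h' := h (by omega)
      rw [hB.eq_of_agree k b b' fun _ i hi => h' i (by omega), h' n (by omega)]
    · exact hB.eq_of_agree k b b' fun hk' => absurd hk' (by omega)
  · obtain ⟨K, hK⟩ := hB.eventually_univ
    exact ⟨max K (n + 1), fun k hk b => by rw [if_neg (by omega)]; exact hK k (by omega) b⟩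
  · intro k hk b b' hag hne
    simp only [if_pos hk, hB.eq_of_agree k b b' fun _ => hag]
    exact (hxm' k b').2.1 hne
  · intro k hk b z hz
    simp only [if_pos hk] at hz ⊢
    exact cylinder_subset_cylinder_of_mem (hxm' k b).1 hz

theorem IsStage.exists_box_subset (hB : IsStage P n B) {V : Set (ℕ → Cantor)} (hV : IsOpen V)
    (hVd : prodSet P ⊆ closure (prodSet P ∩ V)) (t : ℕ → ℕ → Bool) :
    ∃ B' ≤ B, IsStage P n B' ∧ box P B' t ⊆ V := by
  classical
  obtain ⟨K, hK⟩ := hB.eventually_univ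
  set O := ⋂ k ∈ Finset.range K, (fun y : ℕ → Cantor => y k) ⁻¹' B k (t k)
  have hO : IsOpen O := isOpen_biInter_finset fun k _ =>
    (hB.isClopen k (t k)).isOpen.preimage (continuous_apply k)
  choose z hzP hzB using fun k => hB.nonempty k (t k)
  obtain ⟨w, hwO, hwP, hwV⟩ := mem_closure_iff.1 (hVd hzP) O hO (mem_iInter₂.2 fun k _ => hzB k)
  have hwB (k : ℕ) : w k ∈ B k (t k) := by
    by_cases hk : k < K
    · exact mem_iInter₂.1 hwO k (Finset.mem_range.2 hk)
    · rw [hK k (not_lt.1 hk)]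
      trivial
  choose M hM using fun k => exists_cylinder_subset ((hB.isClopen k (t k)).isOpen.mem_nhds (hwB k))
  obtain ⟨L, hL⟩ := exists_forall_lt_cylinder_subset (hV.mem_nhds hwV)
  -- the pieces on `t` of the first `L` coordinates become cylinders around `w ∈ V`, fine enough
  -- for the box of `t` to lie in `V`
  let onBranch (k : ℕ) (b : ℕ → Bool) : Prop := k < L ∧ (k < n → ∀ i < n, b i = t k i)
  refine ⟨fun k b => if onBranch k b then cylinder (w k) (max L (M k)) else B k b,
    fun k b => ?_, ⟨fun k b => ?_, fun k b => ?_, fun k b b' h => ?_, ?_⟩, fun y hy => ?_⟩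
  · beta_reduce
    split_ifs with hkb
    · rw [hB.eq_of_agree k b (t k) hkb.2]
      exact (cylinder_anti _ (le_max_right _ _)).trans (hM k)
    · exact le_rfl
  · split_ifs
    exacts [isClopen_cylinder _ _, hB.isClopen k b]
  · split_ifs
    exacts [⟨w k, hwP k, self_mem_cylinder _ _⟩, hB.nonempty k b]
  · have hkb : onBranch k b ↔ onBranch k b' :=
      and_congr_right fun _ => imp_congr_right fun hk => forall₂_congr fun i hi => by
        rw [h hk i hi]
    beta_reduce
    by_cases hb : onBranch k b
    · rw [if_pos hb, if_pos (hkb.1 hb)]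
    · rw [if_neg hb, if_neg (mt hkb.2 hb), hB.eq_of_agree k b b' h]
  · refine ⟨max K L, fun k hk b => ?_⟩
    rw [if_neg fun hkb => by have := hkb.1; omega]
    exact hK k (by omega) b
  · refine hL fun k hk => ?_
    have hyk := (hy k).2
    beta_reduce at hyk
    rw [if_pos ⟨hk, fun _ _ _ => rfl⟩] at hyk
    exact cylinder_anti _ (le_max_left _ _) hyk

theorem IsStage.exists_forall_mem_box_subset (hB : IsStage P n B) {V : Set (ℕ → Cantor)}
    (hV : IsOpen V) (hVd : prodSet P ⊆ closure (prodSet P ∩ V)) (T : Finset (ℕ → ℕ → Bool)) :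
    ∃ B' ≤ B, IsStage P n B' ∧ ∀ t ∈ T, box P B' t ⊆ V := by
  classical
  induction T using Finset.induction_on generalizing B with
  | empty => exact ⟨B, le_rfl, hB, by simp⟩
  | insert t T _ ih =>
    obtain ⟨B₁, h₁, hB₁, ht⟩ := hB.exists_box_subset hV hVd t
    obtain ⟨B₂, h₂, hB₂, hT⟩ := ih hB₁
    refine ⟨B₂, h₂.trans h₁, hB₂, ?_⟩
    simp only [Finset.mem_insert, forall_eq_or_imp]
    exact ⟨(box_mono h₂ t).trans ht, hT⟩

theorem IsStage.exists_forall_box_subset (hB : IsStage P n B) {V : Set (ℕ → Cantor)}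
    (hV : IsOpen V) (hVd : prodSet P ⊆ closure (prodSet P ∩ V)) :
    ∃ B' ≤ B, IsStage P n B' ∧ ∀ t, box P B' t ⊆ V := by
  classical
  let extend (τ : Fin n → Fin n → Bool) : ℕ → ℕ → Bool := fun k i =>
    if h : k < n ∧ i < n then τ ⟨k, h.1⟩ ⟨i, h.2⟩ else false
  obtain ⟨B', hle, hB', hbox⟩ := hB.exists_forall_mem_box_subset hV hVd (Finset.univ.image extend)
  refine ⟨B', hle, hB', fun t => ?_⟩
  rw [hB'.box_eq_of_agree (t' := extend fun k i => t k i) fun k hk i hi => by simp [extend, hk, hi]]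
  exact hbox _ (Finset.mem_image_of_mem _ (Finset.mem_univ _))

theorem IsStage.exists_next (hB : IsStage P n B) (hP : ∀ k, Preperfect (P k))
    {V : Set (ℕ → Cantor)} (hV : IsOpen V) (hVd : prodSet P ⊆ closure (prodSet P ∩ V)) :
    ∃ B' ≤ B, IsStage P (n + 1) B' ∧ Splits n B' ∧ ∀ t, box P B' t ⊆ V := by
  obtain ⟨B₁, h₁, hB₁, hs₁⟩ := hB.exists_splits hP
  obtain ⟨B₂, h₂, hB₂, hbox⟩ := hB₁.exists_forall_box_subset hV hVd
  exact ⟨B₂, h₂.trans h₁, hB₂, hs₁.mono h₂, hbox⟩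

theorem exists_fusion_seq (hP : PerfectProduct P) {V : ℕ → Set (ℕ → Cantor)}
    (hV : ∀ n, IsOpen (V n)) (hVd : ∀ n, prodSet P ⊆ closure (prodSet P ∩ V n)) :
    ∃ A : ℕ → Scheme, Antitone A ∧ (∀ n, IsStage P n (A n)) ∧ (∀ n, Splits n (A (n + 1))) ∧
      ∀ n t, box P (A (n + 1)) t ⊆ V n := by
  choose! next hnext using fun n B (hB : IsStage P n B) =>
    hB.exists_next (fun k => (hP k).2.acc) (hV n) (hVd n)
  let A (n : ℕ) : Scheme := Nat.rec (motive := fun _ => Scheme) (fun _ _ => univ) next n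
  have hA (n : ℕ) : IsStage P n (A n) := by
    induction n with
    | zero => exact isStage_zero fun k => (hP k).1
    | succ n ih => exact (hnext n _ ih).2.1
  exact ⟨A, antitone_nat_of_succ_le fun n => (hnext n _ (hA n)).1, hA,
    fun n => (hnext n _ (hA n)).2.2.1, fun n => (hnext n _ (hA n)).2.2.2⟩

def limit (P : ℕ → Set Cantor) (A : ℕ → Scheme) (k : ℕ) : Set Cantor :=
  ⋂ n, ⋃ b, P k ∩ A n k b

variable {A : ℕ → Scheme}

theorem limit_subset (k : ℕ) : limit P A k ⊆ P k := fun _ hx =>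
  (mem_iUnion.1 (mem_iInter.1 hx 0)).choose_spec.1

theorem isClosed_limit (hA : ∀ n, IsStage P n (A n)) {k : ℕ} (hP : IsClosed (P k)) :
    IsClosed (limit P A k) :=
  isClosed_iInter fun n => isClosed_iUnion_of_eq_of_forall_lt
    (fun b b' h => by rw [(hA n).eq_of_agree k b b' fun _ => h])
    fun b => hP.inter ((hA n).isClopen k b).isClosed

theorem exists_mem_branch (hanti : Antitone A) (hA : ∀ n, IsStage P n (A n)) {k : ℕ}
    (hP : IsClosed (P k)) (b : ℕ → Bool) : ∃ x, ∀ n, x ∈ P k ∩ A n k b := by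
  have hc (n : ℕ) : IsClosed (P k ∩ A n k b) := hP.inter ((hA n).isClopen k b).isClosed
  obtain ⟨x, hx⟩ := IsCompact.nonempty_iInter_of_sequence_nonempty_isCompact_isClosed _
    (fun n => inter_subset_inter_right _ (hanti n.le_succ k b)) (fun n => (hA n).nonempty k b)
    (hc 0).isCompact hc
  exact ⟨x, mem_iInter.1 hx⟩

theorem mem_limit_of_mem_branch {x : Cantor} {k : ℕ} {b : ℕ → Bool}
    (hx : ∀ n, x ∈ P k ∩ A n k b) : x ∈ limit P A k :=
  mem_iInter.2 fun n => mem_iUnion.2 ⟨b, hx n⟩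

theorem preperfect_limit (hanti : Antitone A) (hA : ∀ n, IsStage P n (A n))
    (hsplit : ∀ n, Splits n (A (n + 1))) {k : ℕ} (hP : IsClosed (P k)) :
    Preperfect (limit P A k) := by
  refine preperfect_iff_nhds.2 fun x hx U hU => ?_
  obtain ⟨l, hl⟩ := exists_cylinder_subset hU
  set n := k + l
  obtain ⟨b, -, hxb⟩ := mem_iUnion.1 (mem_iInter.1 hx (n + 1))
  have hpiece : A (n + 1) k b ⊆ U :=
    ((hsplit n).subset_cylinder k (by omega) b x hxb).trans ((cylinder_anti x (by omega)).trans hl)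
  -- the two branches through `b` that part at bit `n + 1` give two distinct points near `x`
  have hbranch (c : Bool) : ∃ y ∈ U ∩ limit P A k, ∀ n', y ∈ A n' k (update b (n + 1) c) := by
    obtain ⟨y, hy⟩ := exists_mem_branch hanti hA hP (update b (n + 1) c)
    have hagree : A (n + 1) k (update b (n + 1) c) = A (n + 1) k b :=
      (hA (n + 1)).eq_of_agree k _ _ fun _ i hi => update_of_ne (by omega) _ _
    exact ⟨y, ⟨hpiece (hagree ▸ (hy (n + 1)).2), mem_limit_of_mem_branch hy⟩, fun n' => (hy n').2⟩
  obtain ⟨y₀, hy₀, hb₀⟩ := hbranch false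
  obtain ⟨y₁, hy₁, hb₁⟩ := hbranch true
  have hne : y₀ ≠ y₁ := fun h => disjoint_left.1 ((hsplit (n + 1)).disjoint k (by omega) _ _
    (fun i hi => by simp [update_of_ne hi.ne]) (by simp)) (hb₀ (n + 2)) (h ▸ hb₁ (n + 2))
  by_cases h₀ : y₀ = x
  · exact ⟨y₁, hy₁, fun h₁ => hne (h₀.trans h₁.symm)⟩
  · exact ⟨y₀, hy₀, h₀⟩

theorem prodSet_limit_subset {V : ℕ → Set (ℕ → Cantor)} (hbox : ∀ n t, box P (A (n + 1)) t ⊆ V n) :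
    prodSet (limit P A) ⊆ ⋂ n, V n := by
  refine fun x hx => mem_iInter.2 fun n => ?_
  choose t ht using fun k => mem_iUnion.1 (mem_iInter.1 (hx k) (n + 1))
  exact hbox n t ht

end Fusion

open Fusion in
theorem PerfectProduct.exists_subset_iInter {P : ℕ → Set Cantor} (hP : PerfectProduct P)
    {V : ℕ → Set (ℕ → Cantor)} (hV : ∀ n, IsOpen (V n))
    (hVd : ∀ n, prodSet P ⊆ closure (prodSet P ∩ V n)) :
    ∃ Q, PerfectProduct Q ∧ prodSet Q ⊆ prodSet P ∧ prodSet Q ⊆ ⋂ n, V n := by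
  obtain ⟨A, hanti, hA, hsplit, hbox⟩ := exists_fusion_seq hP hV hVd
  have hPc k : IsClosed (P k) := (hP k).2.closed
  have hne k : (limit P A k).Nonempty :=
    (exists_mem_branch hanti hA (hPc k) default).imp fun _ => mem_limit_of_mem_branch
  exact ⟨limit P A,
    fun k => ⟨hne k, isClosed_limit hA (hPc k), preperfect_limit hanti hA hsplit (hPc k)⟩,
    fun x hx k => limit_subset k (hx k), prodSet_limit_subset hbox⟩

theorem PerfectProduct.exists_preimage_subset_of_mem_residual {P : ℕ → Set Cantor}
    (hP : PerfectProduct P) {C : Set (prodSet P)} (hC : C ∈ residual (prodSet P)) :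
    ∃ Q, PerfectProduct Q ∧ prodSet Q ⊆ prodSet P ∧ (↑) ⁻¹' prodSet Q ⊆ C := by
  obtain ⟨U, hUo, hUd, hUC⟩ := exists_isOpen_dense_seq_of_mem_residual hC
  choose V hVo hVU using fun n => isOpen_induced_iff.1 (hUo n)
  have hVd (n : ℕ) : prodSet P ⊆ closure (prodSet P ∩ V n) := by
    simpa only [← hVU n, Subtype.image_preimage_coe] using Subtype.dense_iff.1 (hUd n)
  obtain ⟨Q, hQ, hQP, hQV⟩ := hP.exists_subset_iInter hVo hVd
  refine ⟨Q, hQ, hQP, fun x hx => hUC (mem_iInter.2 fun n => ?_)⟩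
  rw [← hVU n]
  exact mem_iInter.1 (hQV hx) n

/-- for a perfect product `P` and a Borel map `f` on `(2^ℕ)^ω`,
there is a perfect product `Q ⊆ P` on which `f` is continuous. -/
theorem stmt10 (P : ℕ → Set Cantor) (hP : PerfectProduct P)
    (f : (ℕ → Cantor) → Cantor) (hf : Measurable f) :
    ∃ Q : ℕ → Set Cantor, PerfectProduct Q ∧ prodSet Q ⊆ prodSet P ∧
      ContinuousOn f (prodSet Q) := by
  obtain ⟨C, hC, hfC⟩ :=
    (hf.comp (measurable_subtype_coe (p := (· ∈ prodSet P)))).exists_mem_residual_continuousOn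
  obtain ⟨Q, hQ, hQP, hQC⟩ := hP.exists_preimage_subset_of_mem_residual hC
  refine ⟨Q, hQ, hQP, ?_⟩
  have := IsInducing.subtypeVal.continuousOn_image_iff.2 (hfC.mono hQC)
  rwa [Subtype.image_preimage_coe, inter_eq_right.2 hQP] at this
end

section
/- Let P ⊆ (2^ℕ)^ω be a perfect product and let E be an equivalence relation on (2^ℕ)^ω induced by a continuous map ξ: (2^ℕ)^ω → 2^ℕ (x E y iff ξ(x) = ξ(y)). Say E is reduced to U ⊆ ω on P if for all x, y ∈ P, x ↾ U = y ↾ U implies x E y. If U₀, U₁ ⊆ ω and E is reduced to both U₀ and U₁ on P, then E is reduced to U₀ ∩ U₁ on P. -/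
/-- `E` (induced by `ξ`) is reduced to `U ⊆ ω` on `P`:
`x ↾ U = y ↾ U` implies `x E y` for `x, y ∈ P`. -/
def reducedTo (ξ : (ℕ → Cantor) → Cantor) (U : Set ℕ) (S : Set (ℕ → Cantor)) : Prop :=
  ∀ x ∈ S, ∀ y ∈ S, (∀ k ∈ U, x k = y k) → ξ x = ξ y

theorem piecewise_mem_prodSet {P : ℕ → Set Cantor} {x y : ℕ → Cantor} (hx : x ∈ prodSet P)
    (hy : y ∈ prodSet P) (U : Set ℕ) [DecidablePred (· ∈ U)] : U.piecewise x y ∈ prodSet P :=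
  fun k => by by_cases hk : k ∈ U <;> simp [hk, hx k, hy k]

theorem reducedTo_inter_of_piecewise_mem {ξ : (ℕ → Cantor) → Cantor} {U₀ U₁ : Set ℕ}
    {S : Set (ℕ → Cantor)} [DecidablePred (· ∈ U₀)]
    (hS : ∀ x ∈ S, ∀ y ∈ S, U₀.piecewise x y ∈ S)
    (h₀ : reducedTo ξ U₀ S) (h₁ : reducedTo ξ U₁ S) : reducedTo ξ (U₀ ∩ U₁) S := by
  intro x hx y hy hxy
  have hmix := hS x hx y hy
  calc ξ x = ξ (U₀.piecewise x y) :=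
        h₀ x hx _ hmix fun k hk => (Set.piecewise_eq_of_mem _ _ _ hk).symm
    _ = ξ y := h₁ _ hmix y hy fun k hk => by
        by_cases hk₀ : k ∈ U₀
        · rw [Set.piecewise_eq_of_mem _ _ _ hk₀]
          exact hxy k ⟨hk₀, hk⟩
        · exact Set.piecewise_eq_of_notMem _ _ _ hk₀

theorem stmt11_general (P : ℕ → Set Cantor)
    (ξ : (ℕ → Cantor) → Cantor) (U₀ U₁ : Set ℕ)
    (h₀ : reducedTo ξ U₀ (prodSet P)) (h₁ : reducedTo ξ U₁ (prodSet P)) :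
    reducedTo ξ (U₀ ∩ U₁) (prodSet P) := by
  classical
  exact reducedTo_inter_of_piecewise_mem
    (fun x hx y hy => piecewise_mem_prodSet hx hy U₀) h₀ h₁

/-- if the equivalence relation induced by a continuous `ξ` is
reduced to `U₀` and to `U₁` on a perfect product `P`, then it is reduced to
`U₀ ∩ U₁` on `P`. -/
theorem stmt11 (P : ℕ → Set Cantor) (hP : PerfectProduct P)
    (ξ : (ℕ → Cantor) → Cantor) (hξ : Continuous ξ) (U₀ U₁ : Set ℕ)
    (h₀ : reducedTo ξ U₀ (prodSet P)) (h₁ : reducedTo ξ U₁ (prodSet P)) :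
    reducedTo ξ (U₀ ∩ U₁) (prodSet P) :=
  stmt11_general P ξ U₀ U₁ h₀ h₁
end

section
/- Let P ⊆ (2^ℕ)^ω be a perfect product and let E be the equivalence relation on (2^ℕ)^ω induced by a continuous map ξ: (2^ℕ)^ω → 2^ℕ (x E y iff ξ(x) = ξ(y)). If (Uₖ)_{k<ω} is a sequence of subsets of ω such that E is reduced to each Uₖ on P (i.e., x ↾ Uₖ = y ↾ Uₖ implies x E y for x, y ∈ P), then E is reduced to U = ⋂ₖ Uₖ on P. -/
/-- if the equivalence relation induced by a continuous `ξ` is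
reduced to each `Uₖ` on a perfect product `P`, then it is reduced to `⋂ₖ Uₖ`. -/
theorem stmt12 (P : ℕ → Set Cantor) (hP : PerfectProduct P)
    (ξ : (ℕ → Cantor) → Cantor) (hξ : Continuous ξ) (U : ℕ → Set ℕ)
    (h : ∀ k, reducedTo ξ (U k) (prodSet P)) :
    reducedTo ξ (⋂ k, U k) (prodSet P) := by
  classical
  intro x hx y hy hxy
  set V : ℕ → Set ℕ := fun n => {j | ∀ i < n, j ∈ U i} with hVdef
  have hVred : ∀ n, reducedTo ξ (V n) (prodSet P) := by
    intro n
    induction n with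
    | zero =>
      intro a ha b hb hab
      have : a = b := funext fun k => hab k (fun i hi => absurd hi (Nat.not_lt_zero i))
      rw [this]
    | succ n ih =>
      intro a ha b hb hab
      set z : ℕ → Cantor := fun k => if k ∈ U n then a k else b k with hzdef
      have hz : z ∈ prodSet P := by
        intro k
        by_cases h' : k ∈ U n
        · simpa [hzdef, h'] using ha k
        · simpa [hzdef, h'] using hb k
      have h1 : ξ a = ξ z := h n a ha z hz (fun k hk => by simp [hzdef, hk])
      have h2 : ξ z = ξ b := by
        refine ih z hz b hb (fun k hk => ?_)
        by_cases h' : k ∈ U n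
        · have : k ∈ V (n+1) := by
            intro i hi
            rcases Nat.lt_succ_iff_lt_or_eq.mp hi with h''|h''
            · exact hk i h''
            · exact h'' ▸ h'
          simpa [hzdef, h'] using hab k this
        · simp [hzdef, h']
      rw [h1, h2]
  set z : ℕ → (ℕ → Cantor) := fun n k => if k ∈ V n then x k else y k with hzdef
  have hzP : ∀ n, z n ∈ prodSet P := by
    intro n k
    by_cases h' : k ∈ V n
    · simpa [hzdef, h'] using hx k
    · simpa [hzdef, h'] using hy k
  have hzx : ∀ n, ξ (z n) = ξ x :=
    fun n => hVred n (z n) (hzP n) x hx (fun k hk => by simp [hzdef, hk])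
  have htend : Filter.Tendsto z Filter.atTop (nhds y) := by
    rw [tendsto_pi_nhds]
    intro k
    have hev : ∀ᶠ n in Filter.atTop, z n k = y k := by
      by_cases hk : ∀ i, k ∈ U i
      · have hxk : x k = y k := hxy k (Set.mem_iInter.mpr hk)
        exact Filter.Eventually.of_forall fun n => by
          by_cases h' : k ∈ V n <;> simp [hzdef, h', hxk]
      · push_neg at hk
        obtain ⟨i, hi⟩ := hk
        refine Filter.eventually_atTop.mpr ⟨i + 1, fun n hn => ?_⟩
        have : k ∉ V n := fun hkV => hi (hkV i (Nat.lt_of_lt_of_le (Nat.lt_succ_self i) hn))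
        simp [hzdef, this]
    exact Filter.Tendsto.congr' (hev.mono fun n e => e.symm) tendsto_const_nhds
  have h1 : Filter.Tendsto (fun n => ξ (z n)) Filter.atTop (nhds (ξ y)) :=
    (hξ.tendsto y).comp htend
  have h2 : Filter.Tendsto (fun n => ξ (z n)) Filter.atTop (nhds (ξ x)) := by
    simp only [hzx]
    exact tendsto_const_nhds
  exact (tendsto_nhds_unique h2 h1)
end

section
/- Define E on (2^ℕ)^ω by: x E y iff x(0) = y(0) and x(j+1) = y(j+1) for all j with x(0)(j) = 0. Then for no perfect product P ⊆ (2^ℕ)^ω and no U ⊆ ω does E restricted to P coincide with the multiequality Δ_U (where x Δ_U y iff x ↾ U = y ↾ U). -/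
/-- The equivalence relation of Example 2.2: `x E y` iff `x(0) = y(0)` and
`x(j+1) = y(j+1)` for all `j` with `x(0)(j) = 0` (i.e. `= false`). -/
def Erel (x y : ℕ → Cantor) : Prop :=
  x 0 = y 0 ∧ ∀ j, x 0 j = false → x (j + 1) = y (j + 1)

/-!
If `E` agreed with `Δ_U` on a perfect product `P`, then fixing all coordinates of a point
of `P` except `j + 1`, which we let range over two distinct points of `P (j + 1)`, we get
two points that are `Δ_U`-equivalent iff `j + 1 ∉ U` and `E`-equivalent iff `x 0 j = true`.
So the membership `j + 1 ∈ U` determines the bit `x 0 j` for every `x 0 ∈ P 0`, making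
`P 0` a singleton, which is not perfect.
-/

lemma PerfectSet.nontrivial {X : Set Cantor} (h : PerfectSet X) : X.Nontrivial := by
  obtain ⟨⟨x, hx⟩, hperf⟩ := h
  obtain ⟨y, hyx, hy⟩ := (accPt_iff_frequently.mp (hperf.acc x hx)).exists
  exact ⟨y, hy, x, hx, hyx⟩

lemma update_mem_prodSet {P : ℕ → Set Cantor} {x : ℕ → Cantor} (hx : x ∈ prodSet P)
    {k : ℕ} {w : Cantor} (hw : w ∈ P k) : Function.update x k w ∈ prodSet P := by
  intro i
  rcases eq_or_ne i k with rfl | hik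
  · simpa using hw
  · simpa [hik] using hx i

lemma forall_mem_update_eq_update_iff {α : Type*} {β : Type*} [DecidableEq α] {U : Set α}
    (x : α → β) (i : α) (u v : β) :
    (∀ k ∈ U, Function.update x i u k = Function.update x i v k) ↔ (i ∈ U → u = v) := by
  refine ⟨fun h hi => by simpa using h i hi, fun h k hk => ?_⟩
  rcases eq_or_ne k i with rfl | hki
  · simp [h hk]
  · simp [hki]

lemma erel_update_succ_iff (x : ℕ → Cantor) (j : ℕ) (u v : Cantor) :
    Erel (Function.update x (j + 1) u) (Function.update x (j + 1) v) ↔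
      (x 0 j = false → u = v) := by
  simp only [Erel, Function.update_of_ne (Nat.succ_ne_zero j).symm, true_and]
  refine ⟨fun h hj => by simpa using h j hj, fun h i hi => ?_⟩
  rcases eq_or_ne i j with rfl | hij
  · simp [h hi]
  · simp [hij]

lemma succ_notMem_iff_of_erel_iff {P : ℕ → Set Cantor} {U : Set ℕ}
    (hiff : ∀ x ∈ prodSet P, ∀ y ∈ prodSet P, (Erel x y ↔ ∀ k ∈ U, x k = y k))
    {x : ℕ → Cantor} (hx : x ∈ prodSet P) {j : ℕ} (hj : (P (j + 1)).Nontrivial) :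
    j + 1 ∉ U ↔ x 0 j = true := by
  obtain ⟨u, hu, v, hv, huv⟩ := hj
  have h := hiff _ (update_mem_prodSet hx hu) _ (update_mem_prodSet hx hv)
  rw [erel_update_succ_iff, forall_mem_update_eq_update_iff] at h
  simpa [huv] using h.symm

/-- on no perfect product `P` does `E` coincide with a
multiequality `Δ_U` (`x Δ_U y` iff `x(k) = y(k)` for all `k ∈ U`). -/
theorem stmt14 :
    ¬ ∃ (P : ℕ → Set Cantor) (U : Set ℕ), PerfectProduct P ∧
      ∀ x ∈ prodSet P, ∀ y ∈ prodSet P, (Erel x y ↔ ∀ k ∈ U, x k = y k) := by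
  rintro ⟨P, U, hP, hiff⟩
  choose c hc using fun k => (hP k).1
  obtain ⟨p, hp, q, hq, hpq⟩ := (hP 0).nontrivial
  refine hpq (funext fun j => Bool.eq_iff_iff.mpr ?_)
  have hbit : ∀ a ∈ P 0, j + 1 ∉ U ↔ a j = true := fun a ha => by
    simpa using succ_notMem_iff_of_erel_iff hiff (update_mem_prodSet hc ha) (hP (j + 1)).nontrivial
  exact (hbit p hp).symm.trans (hbit q hq)
end
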